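/- In G = ℤ² ⋊ ℤ/2ℤ (swap action) with a = ((1,0),0), t = ((0,0),1), the word length (distance from the identity in the Cayley graph with respect to A = {a±1, t±1}) of the element ((x,y),1) equals |x| + |y| + 1 for all integers x, y. -/

import Mathlib

/-- The coordinate-swapping automorphism of ℤ². -/
def swapAut : MulAut (Multiplicative (ℤ × ℤ)) :=
  AddEquiv.toMultiplicative (AddEquiv.prodComm : (ℤ × ℤ) ≃+ (ℤ × ℤ))

lemma swapAut_sq : swapAut ^ 2 = 1 := by
  refine MulEquiv.ext fun z => ?_
  show swapAut (swapAut z) = z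
  cases z
  rfl

/-- The action of ℤ/2ℤ on ℤ² by swapping the two coordinates. -/
def swapAction : Multiplicative (ZMod 2) →* MulAut (Multiplicative (ℤ × ℤ)) where
  toFun ε := swapAut ^ (Multiplicative.toAdd ε).val
  map_one' := rfl
  map_mul' x y := by
    show swapAut ^ _ = swapAut ^ _ * swapAut ^ _
    rw [← pow_add]
    have key : ∀ m n : ℕ, m % 2 = n % 2 → swapAut ^ m = swapAut ^ n := by
      intro m n h
      rw [← Nat.div_add_mod m 2, ← Nat.div_add_mod n 2, h, pow_add, pow_add,
        pow_mul, pow_mul, swapAut_sq]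
      simp
    apply key
    have := ZMod.val_add (Multiplicative.toAdd x) (Multiplicative.toAdd y)
    simp only [toAdd_mul] at *
    omega

/-- The group G = ℤ² ⋊ ℤ/2ℤ with the swap action. -/
abbrev GG := SemidirectProduct (Multiplicative (ℤ × ℤ)) (Multiplicative (ZMod 2)) swapAction

/-- The generator a = ((1,0), 0). -/
def ga : GG := SemidirectProduct.inl (Multiplicative.ofAdd ((1, 0) : ℤ × ℤ))

/-- The generator t = ((0,0), 1). -/
def gt : GG := SemidirectProduct.inr (Multiplicative.ofAdd (1 : ZMod 2))

/-- The element ((x,y), ε) of G. -/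
def el (x y : ℤ) (ε : ZMod 2) : GG :=
  ⟨Multiplicative.ofAdd (x, y), Multiplicative.ofAdd ε⟩

/-- The generating set A = {a, a⁻¹, t, t⁻¹}. -/
def GenSet : Set GG := {ga, ga⁻¹, gt, gt⁻¹}

/-- `w` is a word over the alphabet A. -/
def IsWord (w : List GG) : Prop := ∀ x ∈ w, x ∈ GenSet

/-- `w` is a word over A representing the group element `g` (via its product). -/
def Represents (w : List GG) (g : GG) : Prop := IsWord w ∧ w.prod = g

/-- The word length of `g`: minimal length of a word over A representing `g`. -/
noncomputable def wordLength (g : GG) : ℕ :=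
  sInf {n | ∃ w : List GG, Represents w g ∧ w.length = n}

/-- A word over A is geodesic if no strictly shorter word over A represents
the same element. -/
def IsGeodesic (w : List GG) : Prop :=
  IsWord w ∧ ∀ v : List GG, IsWord v → v.prod = w.prod → w.length ≤ v.length

open Classical in
/-- The number of t-letters of a word (occurrences of t and t⁻¹). -/
noncomputable def tCount (w : List GG) : ℕ :=
  w.countP (fun x => decide (x = gt ∨ x = gt⁻¹))

/-- The word aˣ over A: x letters `a` if x ≥ 0, |x| letters `a⁻¹` if x < 0. -/
def apow (x : ℤ) : List GG :=
  if 0 ≤ x then List.replicate x.toNat ga else List.replicate (-x).toNat ga⁻¹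

/-- The word metric on G with respect to A. -/
noncomputable def dA (g h : GG) : ℕ := wordLength (g⁻¹ * h)

/-- The point of G reached at time i along the word w (the endpoint if i
exceeds the length of w). -/
def pt (w : List GG) (i : ℕ) : GG := (w.take i).prod

/-- Words u and w synchronously k-fellow travel. -/
def FellowTravels (k : ℕ) (u w : List GG) : Prop :=
  ∀ i : ℕ, dA (pt u i) (pt w i) ≤ k

/-!
The word `aˣ t aʸ` represents `((x,y),1)` and has length `|x| + |y| + 1`. Conversely, the
weight `|x| + |y| + [ε = 1]` of `((x,y),ε)` grows by at most one under left multiplication by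
a generator: `a±1` changes `x` by one, while `t` swaps the coordinates and flips `ε`.
-/

lemma exists_eq_el (g : GG) : ∃ x y ε, g = el x y ε := by
  obtain ⟨⟨x, y⟩, ε⟩ := g
  exact ⟨x, y, ε, rfl⟩

lemma ga_eq_el : ga = el 1 0 0 := rfl

lemma ga_inv_eq_el : ga⁻¹ = el (-1) 0 0 := rfl

lemma gt_inv : gt⁻¹ = gt := rfl

lemma el_zero_mul (x y x' y' : ℤ) (ε : ZMod 2) :
    el x y 0 * el x' y' ε = el (x + x') (y + y') ε := by
  refine SemidirectProduct.ext rfl ?_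
  show Multiplicative.ofAdd (0 + ε) = Multiplicative.ofAdd ε
  rw [zero_add]

lemma gt_mul_el (x y : ℤ) (ε : ZMod 2) : gt * el x y ε = el y x (1 + ε) := by
  refine SemidirectProduct.ext ?_ rfl
  show 1 * swapAut (Multiplicative.ofAdd (x, y)) = Multiplicative.ofAdd (y, x)
  rw [one_mul]
  rfl

lemma prod_replicate_el (n : ℕ) (s : ℤ) :
    (List.replicate n (el s 0 0)).prod = el (n * s) 0 0 := by
  induction n with
  | zero => rw [List.replicate_zero, List.prod_nil, Nat.cast_zero, zero_mul]; rfl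
  | succ n ih =>
    rw [List.replicate_succ, List.prod_cons, ih, el_zero_mul]
    congr 1
    push_cast
    ring

lemma prod_apow (x : ℤ) : (apow x).prod = el x 0 0 := by
  unfold apow
  split_ifs with hx
  · rw [ga_eq_el, prod_replicate_el, mul_one, Int.toNat_of_nonneg hx]
  · rw [ga_inv_eq_el, prod_replicate_el, Int.toNat_of_nonneg (by omega), mul_neg_one, neg_neg]

lemma length_apow (x : ℤ) : (apow x).length = x.natAbs := by
  unfold apow
  split_ifs <;> simp only [List.length_replicate] <;> omega

lemma isWord_apow (x : ℤ) : IsWord (apow x) := by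
  intro s hs
  unfold apow at hs
  split_ifs at hs <;> rw [List.eq_of_mem_replicate hs] <;> simp [GenSet]

lemma represents_apow_gt_apow (x y : ℤ) : Represents (apow x ++ gt :: apow y) (el x y 1) := by
  refine ⟨?_, ?_⟩
  · intro s hs
    simp only [List.mem_append, List.mem_cons] at hs
    rcases hs with hs | rfl | hs
    · exact isWord_apow x s hs
    · simp [GenSet]
    · exact isWord_apow y s hs
  · rw [List.prod_append, List.prod_cons, prod_apow, prod_apow, gt_mul_el, el_zero_mul]
    simp

lemma length_apow_gt_apow (x y : ℤ) :
    (apow x ++ gt :: apow y).length = x.natAbs + y.natAbs + 1 := by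
  simp only [List.length_append, List.length_cons, length_apow]
  omega

def weight (g : GG) : ℕ :=
  (Multiplicative.toAdd g.left).1.natAbs + (Multiplicative.toAdd g.left).2.natAbs +
    (Multiplicative.toAdd g.right).val

lemma weight_el (x y : ℤ) (ε : ZMod 2) : weight (el x y ε) = x.natAbs + y.natAbs + ε.val := rfl

lemma weight_mul_le {s : GG} (hs : s ∈ GenSet) (g : GG) : weight (s * g) ≤ weight g + 1 := by
  obtain ⟨x, y, ε, rfl⟩ := exists_eq_el g
  have hflip : (1 + ε).val < 2 := ZMod.val_lt _
  simp only [GenSet, Set.mem_insert_iff, Set.mem_singleton_iff] at hs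
  rcases hs with rfl | rfl | rfl | rfl
  · rw [ga_eq_el, el_zero_mul, weight_el, weight_el]
    omega
  · rw [ga_inv_eq_el, el_zero_mul, weight_el, weight_el]
    omega
  · rw [gt_mul_el, weight_el, weight_el]
    omega
  · rw [gt_inv, gt_mul_el, weight_el, weight_el]
    omega

lemma weight_prod_le_length {w : List GG} (hw : IsWord w) : weight w.prod ≤ w.length := by
  induction w with
  | nil => rfl
  | cons s w ih =>
    rw [List.prod_cons, List.length_cons]
    have hs := weight_mul_le (hw s List.mem_cons_self) w.prod
    have hw' := ih fun t ht => hw t (List.mem_cons_of_mem s ht)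
    omega

lemma wordLength_eq_of_minimal {w : List GG} {g : GG} (hw : Represents w g)
    (hmin : ∀ v, Represents v g → w.length ≤ v.length) : wordLength g = w.length :=
  le_antisymm (Nat.sInf_le ⟨w, hw, rfl⟩) (le_csInf ⟨_, w, hw, rfl⟩ fun _ ⟨v, hv, hlen⟩ =>
    hlen ▸ hmin v hv)

/-- The word length of the element ((x,y),1) equals |x| + |y| + 1. -/
theorem wordLength_top (x y : ℤ) : wordLength (el x y 1) = x.natAbs + y.natAbs + 1 := by
  rw [← length_apow_gt_apow x y]
  refine wordLength_eq_of_minimal (represents_apow_gt_apow x y) fun v ⟨hv, hprod⟩ => ?_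
  calc (apow x ++ gt :: apow y).length
      = weight (el x y 1) := length_apow_gt_apow x y
    _ = weight v.prod := by rw [hprod]
    _ ≤ v.length := weight_prod_le_length hv
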